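/- arXiv:2511.14862 — 3 statements merged into one kernel-verified Lean document; each statement's English description precedes it below -/
import Mathlib

section
/- Let α and β be weight functions on finite sets U and V, let c : U × V → [0,∞) be a cost function, and suppose that every γ ∈ J*(α,β) satisfies ⟨c, r_γ⟩ = 0. Then the following are equivalent: (i) for every weight joining γ ∈ J*(α,β) there exists a bijective weight joining γ' ∈ J*(α,β) with supp(γ') ⊆ supp(γ); (ii) every extreme point of J*(α,β) is bijective. -/
open Finset

def IsWeightFunction {U : Type*} [Fintype U] (α : U → U → ℝ) : Prop :=
  (∀ u u', 0 ≤ α u u') ∧ (∀ u u', α u u' = α u' u) ∧ (∑ u, ∑ u', α u u' = 1)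

noncomputable def marginal {U : Type*} [Fintype U] (α : U → U → ℝ) (u : U) : ℝ :=
  ∑ u', α u u'

def IsWeightJoining {U V : Type*} [Fintype U] [Fintype V]
    (α : U → U → ℝ) (β : V → V → ℝ) (γ : U × V → U × V → ℝ) : Prop :=
  IsWeightFunction γ ∧
  (∀ u, ∑ v, marginal γ (u, v) = marginal α u) ∧
  (∀ v, ∑ u, marginal γ (u, v) = marginal β v) ∧
  (∀ u u' v, marginal α u * ∑ v', γ (u, v) (u', v') = α u u' * marginal γ (u, v)) ∧
  (∀ v v' u, marginal β v * ∑ u', γ (u, v) (u', v') = β v v' * marginal γ (u, v))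

def weightJoinings {U V : Type*} [Fintype U] [Fintype V]
    (α : U → U → ℝ) (β : V → V → ℝ) : Set (U × V → U × V → ℝ) :=
  {γ | IsWeightJoining α β γ}

noncomputable def ogjCost {U V : Type*} [Fintype U] [Fintype V]
    (c : U → V → ℝ) (γ : U × V → U × V → ℝ) : ℝ :=
  ∑ p : U × V, c p.1 p.2 * marginal γ p

/-- The support of a function on pairs of pairs. -/
def jsupp {U V : Type*} (γ : U × V → U × V → ℝ) : Set ((U × V) × (U × V)) :=
  {pq | 0 < γ pq.1 pq.2}

/-- A weight joining is bijective if each `u ∈ U` has a unique `v ∈ V` with positive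
joint marginal and vice versa. -/
def IsBijectiveJoining {U V : Type*} [Fintype U] [Fintype V]
    (γ : U × V → U × V → ℝ) : Prop :=
  (∀ u : U, ∃! v : V, 0 < marginal γ (u, v)) ∧ (∀ v : V, ∃! u : U, 0 < marginal γ (u, v))

/-- `γ` is an extreme point of the convex set `C`. -/
def IsExtremePointOf {X : Type*} [AddCommGroup X] [Module ℝ X] (C : Set X) (γ : X) : Prop :=
  γ ∈ C ∧ ∀ γ₁ ∈ C, ∀ γ₂ ∈ C, ∀ t : ℝ, 0 < t → t < 1 →
    γ = t • γ₁ + (1 - t) • γ₂ → γ = γ₁ ∧ γ = γ₂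

/-- The set `J*(α,β)` of weight joinings minimizing the cost `⟨c, r_γ⟩`. -/
def optimalJoinings {U V : Type*} [Fintype U] [Fintype V]
    (α : U → U → ℝ) (β : V → V → ℝ) (c : U → V → ℝ) : Set (U × V → U × V → ℝ) :=
  {γ ∈ weightJoinings α β | ∀ γ' ∈ weightJoinings α β, ogjCost c γ ≤ ogjCost c γ'}

section Aux

variable {U V : Type*} [Fintype U] [Fintype V]

lemma marginal_comb (γ₁ γ₂ : U × V → U × V → ℝ) (a b : ℝ) (p : U × V) :
    marginal (fun x y => a * γ₁ x y + b * γ₂ x y) p = a * marginal γ₁ p + b * marginal γ₂ p := by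
  simp [marginal, Finset.sum_add_distrib, Finset.mul_sum]

lemma wj_le_one {α : U → U → ℝ} {β : V → V → ℝ} {γ : U × V → U × V → ℝ}
    (h : IsWeightJoining α β γ) (p q : U × V) : γ p q ≤ 1 := by
  have h1 : γ p q ≤ ∑ q', γ p q' :=
    Finset.single_le_sum (fun q' _ => h.1.1 p q') (Finset.mem_univ q)
  have h2 : ∑ q', γ p q' ≤ ∑ p', ∑ q', γ p' q' :=
    Finset.single_le_sum (f := fun p' => ∑ q', γ p' q')
      (fun p' _ => Finset.sum_nonneg fun q' _ => h.1.1 p' q') (Finset.mem_univ p)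
  have h3 := h.1.2.2
  linarith

lemma comb_mem_weightJoinings {α : U → U → ℝ} {β : V → V → ℝ} {γ₁ γ₂ : U × V → U × V → ℝ}
    (h₁ : IsWeightJoining α β γ₁) (h₂ : IsWeightJoining α β γ₂) {a b : ℝ} (hab : a + b = 1)
    (hpos : ∀ p q, 0 ≤ a * γ₁ p q + b * γ₂ p q) :
    IsWeightJoining α β (fun p q => a * γ₁ p q + b * γ₂ p q) := by
  obtain ⟨⟨h1n, h1s, h1t⟩, h1u, h1v, h1a, h1b⟩ := h₁
  obtain ⟨⟨h2n, h2s, h2t⟩, h2u, h2v, h2a, h2b⟩ := h₂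
  refine ⟨⟨hpos, fun p q => by simp only []; rw [h1s p q, h2s p q], ?_⟩, ?_, ?_, ?_, ?_⟩
  · simp only [Finset.sum_add_distrib, ← Finset.mul_sum]
    rw [h1t, h2t]; linarith
  · intro u
    simp only [marginal_comb, Finset.sum_add_distrib, ← Finset.mul_sum, h1u, h2u]
    linear_combination (marginal α u) * hab
  · intro v
    simp only [marginal_comb, Finset.sum_add_distrib, ← Finset.mul_sum, h1v, h2v]
    linear_combination (marginal β v) * hab
  · intro u u' v
    simp only [marginal_comb, Finset.sum_add_distrib, ← Finset.mul_sum]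
    linear_combination a * (h1a u u' v) + b * (h2a u u' v)
  · intro v v' u
    simp only [marginal_comb, Finset.sum_add_distrib, ← Finset.mul_sum]
    linear_combination a * (h1b v v' u) + b * (h2b v v' u)

lemma ogjCost_comb (c : U → V → ℝ) (γ₁ γ₂ : U × V → U × V → ℝ) (a b : ℝ) :
    ogjCost c (fun p q => a * γ₁ p q + b * γ₂ p q) =
      a * ogjCost c γ₁ + b * ogjCost c γ₂ := by
  simp only [ogjCost, marginal_comb, mul_add, Finset.sum_add_distrib, Finset.mul_sum]
  congr 1 <;> exact Finset.sum_congr rfl fun p _ => by ring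

lemma comb_mem_optimal {α : U → U → ℝ} {β : V → V → ℝ} {c : U → V → ℝ}
    (hzero : ∀ γ ∈ optimalJoinings α β c, ogjCost c γ = 0)
    {γ₁ γ₂ : U × V → U × V → ℝ}
    (h₁ : γ₁ ∈ optimalJoinings α β c) (h₂ : γ₂ ∈ optimalJoinings α β c)
    {a b : ℝ} (hab : a + b = 1)
    (hpos : ∀ p q, 0 ≤ a * γ₁ p q + b * γ₂ p q) :
    (fun p q => a * γ₁ p q + b * γ₂ p q) ∈ optimalJoinings α β c := by
  refine ⟨comb_mem_weightJoinings h₁.1 h₂.1 hab hpos, fun γ'' hγ'' => ?_⟩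
  rw [ogjCost_comb, hzero γ₁ h₁, hzero γ₂ h₂, mul_zero, mul_zero, add_zero]
  have := h₁.2 γ'' hγ''
  linarith [hzero γ₁ h₁]

lemma continuous_eval2 (p q : U × V) :
    Continuous (fun γ : U × V → U × V → ℝ => γ p q) :=
  (continuous_apply q).comp (continuous_apply p)

lemma continuous_marginal' (p : U × V) :
    Continuous (fun γ : U × V → U × V → ℝ => marginal γ p) := by
  unfold marginal
  exact continuous_finset_sum _ fun q _ => continuous_eval2 p q

lemma continuous_ogjCost (c : U → V → ℝ) :
    Continuous (fun γ : U × V → U × V → ℝ => ogjCost c γ) := by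
  unfold ogjCost
  exact continuous_finset_sum _ fun p _ => (continuous_const.mul (continuous_marginal' p))

lemma isClosed_weightJoinings (α : U → U → ℝ) (β : V → V → ℝ) :
    IsClosed (weightJoinings α β) := by
  have heq : weightJoinings α β =
      (⋂ p, ⋂ q, {γ : U × V → U × V → ℝ | 0 ≤ γ p q}) ∩
      (⋂ p, ⋂ q, {γ : U × V → U × V → ℝ | γ p q = γ q p}) ∩
      {γ : U × V → U × V → ℝ | ∑ p, ∑ q, γ p q = 1} ∩
      (⋂ u, {γ : U × V → U × V → ℝ | ∑ v, marginal γ (u, v) = marginal α u}) ∩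
      (⋂ v, {γ : U × V → U × V → ℝ | ∑ u, marginal γ (u, v) = marginal β v}) ∩
      (⋂ u, ⋂ u', ⋂ v, {γ : U × V → U × V → ℝ |
        marginal α u * ∑ v', γ (u, v) (u', v') = α u u' * marginal γ (u, v)}) ∩
      (⋂ v, ⋂ v', ⋂ u, {γ : U × V → U × V → ℝ |
        marginal β v * ∑ u', γ (u, v) (u', v') = β v v' * marginal γ (u, v)}) := by
    ext γ
    simp only [weightJoinings, IsWeightJoining, IsWeightFunction, Set.mem_setOf_eq,
      Set.mem_inter_iff, Set.mem_iInter]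
    tauto
  rw [heq]
  refine ((((((isClosed_iInter fun p => isClosed_iInter fun q =>
      isClosed_le continuous_const (continuous_eval2 p q)).inter
    (isClosed_iInter fun p => isClosed_iInter fun q =>
      isClosed_eq (continuous_eval2 p q) (continuous_eval2 q p))).inter
    (isClosed_eq (continuous_finset_sum _ fun p _ =>
      continuous_finset_sum _ fun q _ => continuous_eval2 p q) continuous_const)).inter
    (isClosed_iInter fun u => isClosed_eq
      (continuous_finset_sum _ fun v _ => continuous_marginal' (u, v)) continuous_const)).inter
    (isClosed_iInter fun v => isClosed_eq
      (continuous_finset_sum _ fun u _ => continuous_marginal' (u, v)) continuous_const)).inter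
    (isClosed_iInter fun u => isClosed_iInter fun u' => isClosed_iInter fun v =>
      isClosed_eq (continuous_const.mul (continuous_finset_sum _ fun v' _ =>
        continuous_eval2 (u, v) (u', v')))
        (continuous_const.mul (continuous_marginal' (u, v))))).inter
    (isClosed_iInter fun v => isClosed_iInter fun v' => isClosed_iInter fun u =>
      isClosed_eq (continuous_const.mul (continuous_finset_sum _ fun u' _ =>
        continuous_eval2 (u, v) (u', v')))
        (continuous_const.mul (continuous_marginal' (u, v))))

lemma isClosed_optimalJoinings (α : U → U → ℝ) (β : V → V → ℝ) (c : U → V → ℝ) :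
    IsClosed (optimalJoinings α β c) := by
  have heq : optimalJoinings α β c = weightJoinings α β ∩
      ⋂ γ', {γ : U × V → U × V → ℝ |
        γ' ∈ weightJoinings α β → ogjCost c γ ≤ ogjCost c γ'} := by
    ext γ
    simp only [optimalJoinings, Set.mem_setOf_eq, Set.mem_inter_iff, Set.mem_iInter]
  rw [heq]
  refine (isClosed_weightJoinings α β).inter (isClosed_iInter fun γ' => ?_)
  by_cases h : γ' ∈ weightJoinings α β
  · simp only [h, forall_true_left]
    exact isClosed_le (continuous_ogjCost c) continuous_const
  · have : {γ : U × V → U × V → ℝ |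
        γ' ∈ weightJoinings α β → ogjCost c γ ≤ ogjCost c γ'} = Set.univ := by
      ext x; simp [h]
    rw [this]; exact isClosed_univ

end Aux

/-- Suppose every optimal weight joining has zero cost.  Then
every `γ ∈ J*(α,β)` dominates the support of some bijective `γ' ∈ J*(α,β)` iff every
extreme point of `J*(α,β)` is bijective. -/
theorem bijective_support_iff_extreme_bijective
    {U V : Type*} [Fintype U] [Fintype V]
    (α : U → U → ℝ) (β : V → V → ℝ)
    (hα : IsWeightFunction α) (hβ : IsWeightFunction β)
    (c : U → V → ℝ) (hc : ∀ u v, 0 ≤ c u v)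
    (hzero : ∀ γ ∈ optimalJoinings α β c, ogjCost c γ = 0) :
    (∀ γ ∈ optimalJoinings α β c, ∃ γ' ∈ optimalJoinings α β c,
        IsBijectiveJoining γ' ∧ jsupp γ' ⊆ jsupp γ) ↔
    (∀ γ : U × V → U × V → ℝ,
        IsExtremePointOf (optimalJoinings α β c) γ → IsBijectiveJoining γ) := by
  constructor
  · -- (i) → (ii)
    intro hdom γ hγext
    obtain ⟨hγ, hext⟩ := hγext
    obtain ⟨γ', hγ', hbij, hsupp⟩ := hdom γ hγ
    classical
    have hγw : IsWeightJoining α β γ := hγ.1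
    set s : Finset ((U × V) × (U × V)) :=
      Finset.univ.filter (fun pq => 0 < γ pq.1 pq.2) with hs_def
    have hsne : s.Nonempty := by
      by_contra h
      rw [Finset.not_nonempty_iff_eq_empty] at h
      have hall : ∀ p q : U × V, γ p q = 0 := by
        intro p q
        have h0 : ¬ (0 < γ p q) := by
          intro hlt
          have hmem : ((p, q) : (U × V) × (U × V)) ∈ s := by
            simp [hs_def, hlt]
          simp [h] at hmem
        linarith [hγw.1.1 p q]
      have ht := hγw.1.2.2
      simp [hall] at ht
    set m : ℝ := s.inf' hsne (fun pq => γ pq.1 pq.2) with hm_def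
    have hm_pos : 0 < m := by
      rw [hm_def, Finset.lt_inf'_iff]
      intro pq hpq
      exact (Finset.mem_filter.mp hpq).2
    have hm_le : ∀ p q : U × V, 0 < γ p q → m ≤ γ p q := by
      intro p q h
      exact Finset.inf'_le (fun pq => γ pq.1 pq.2)
        (show ((p, q) : (U × V) × (U × V)) ∈ s from
          Finset.mem_filter.mpr ⟨Finset.mem_univ _, h⟩)
    have hm_le_one : m ≤ 1 := by
      obtain ⟨pq, hpq⟩ := hsne
      exact le_trans (Finset.inf'_le _ hpq) (wj_le_one hγw _ _)
    set ε : ℝ := m / 2 with hε_def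
    have hvan : ∀ p q : U × V, γ p q = 0 → γ' p q = 0 := by
      intro p q h0
      by_contra hne
      have hpos' : 0 < γ' p q := lt_of_le_of_ne (hγ'.1.1.1 p q) (Ne.symm hne)
      have hmem : ((p, q) : (U × V) × (U × V)) ∈ jsupp γ' := hpos'
      have hmem2 := hsupp hmem
      simp only [jsupp, Set.mem_setOf_eq] at hmem2
      linarith
    have h2pos : ∀ p q : U × V, 0 ≤ (1 + ε) * γ p q + (-ε) * γ' p q := by
      intro p q
      rcases eq_or_lt_of_le (hγw.1.1 p q) with h0 | hpos0
      · rw [← h0, hvan p q h0.symm]; norm_num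
      · have h1 := hm_le p q hpos0
        have h2 := wj_le_one hγ'.1 p q
        nlinarith
    have h1pos : ∀ p q : U × V, 0 ≤ (1 - ε) * γ p q + ε * γ' p q := by
      intro p q
      have n1 := hγw.1.1 p q
      have n2 := hγ'.1.1.1 p q
      have h2 := wj_le_one hγw p q
      nlinarith [hm_pos, hm_le_one]
    have hγ₁ := comb_mem_optimal hzero hγ hγ' (by ring : (1 - ε) + ε = 1) h1pos
    have hγ₂ := comb_mem_optimal hzero hγ hγ' (by ring : (1 + ε) + (-ε) = 1) h2pos
    have heq : γ = (1/2 : ℝ) • (fun p q => (1 - ε) * γ p q + ε * γ' p q)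
        + (1 - 1/2 : ℝ) • (fun p q => (1 + ε) * γ p q + (-ε) * γ' p q) := by
      funext p q
      simp only [Pi.add_apply, Pi.smul_apply, smul_eq_mul]
      ring
    obtain ⟨he1, _⟩ := hext _ hγ₁ _ hγ₂ (1/2) (by norm_num) (by norm_num) heq
    have hγγ' : γ' = γ := by
      funext p q
      have hpt := congrFun (congrFun he1 p) q
      have hpt : γ p q = (1 - ε) * γ p q + ε * γ' p q := hpt
      have hep : ε * γ p q = ε * γ' p q := by linarith
      exact (mul_left_cancel₀ (ne_of_gt (by positivity : (0:ℝ) < ε)) hep).symm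
    exact hγγ' ▸ hbij
  · -- (ii) → (i)
    intro hext γ hγ
    classical
    set F : Set (U × V → U × V → ℝ) :=
      {γ'' | γ'' ∈ optimalJoinings α β c ∧ ∀ p q, γ p q = 0 → γ'' p q = 0} with hF_def
    have hFne : F.Nonempty := ⟨γ, hγ, fun p q h => h⟩
    have hFclosed : IsClosed F := by
      have hFeq : F = optimalJoinings α β c ∩
          ⋂ p, ⋂ q, {γ'' : U × V → U × V → ℝ | γ p q = 0 → γ'' p q = 0} := by
        ext x
        simp only [hF_def, Set.mem_setOf_eq, Set.mem_inter_iff, Set.mem_iInter]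
      rw [hFeq]
      refine (isClosed_optimalJoinings α β c).inter
        (isClosed_iInter fun p => isClosed_iInter fun q => ?_)
      by_cases h : γ p q = 0
      · have hs : {γ'' : U × V → U × V → ℝ | γ p q = 0 → γ'' p q = 0} =
            {γ'' : U × V → U × V → ℝ | γ'' p q = 0} := by
          ext x; simp [h]
        rw [hs]
        exact isClosed_eq (continuous_eval2 p q) continuous_const
      · have hs : {γ'' : U × V → U × V → ℝ | γ p q = 0 → γ'' p q = 0} = Set.univ := by
          ext x; simp [h]
        rw [hs]; exact isClosed_univ
    have hFbd : F ⊆ Metric.closedBall 0 1 := by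
      intro x hx
      rw [Metric.mem_closedBall, dist_zero_right]
      rw [pi_norm_le_iff_of_nonneg (by norm_num : (0:ℝ) ≤ 1)]
      intro p
      rw [pi_norm_le_iff_of_nonneg (by norm_num : (0:ℝ) ≤ 1)]
      intro q
      rw [Real.norm_eq_abs, abs_le]
      have hw : IsWeightJoining α β x := hx.1.1
      exact ⟨by linarith [hw.1.1 p q], wj_le_one hw p q⟩
    have hFcomp : IsCompact F :=
      Metric.isCompact_of_isClosed_isBounded hFclosed
        (Metric.isBounded_closedBall.subset hFbd)
    obtain ⟨e, he⟩ := hFcomp.extremePoints_nonempty hFne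
    rw [mem_extremePoints] at he
    obtain ⟨heF, hemin⟩ := he
    have heOpt : IsExtremePointOf (optimalJoinings α β c) e := by
      refine ⟨heF.1, fun γ₁ h₁ γ₂ h₂ t ht0 ht1 heq => ?_⟩
      have hz : ∀ p q, γ p q = 0 → γ₁ p q = 0 ∧ γ₂ p q = 0 := by
        intro p q h0
        have he0 : e p q = 0 := heF.2 p q h0
        have hcomb : e p q = t * γ₁ p q + (1 - t) * γ₂ p q := by
          have := congrFun (congrFun heq p) q
          simpa using this
        have n1 := h₁.1.1.1 p q
        have n2 := h₂.1.1.1 p q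
        have ht1' : (0:ℝ) ≤ 1 - t := by linarith
        have h1z : t * γ₁ p q = 0 := by
          nlinarith [mul_nonneg ht0.le n1, mul_nonneg ht1' n2]
        have h2z : (1 - t) * γ₂ p q = 0 := by
          nlinarith [mul_nonneg ht0.le n1, mul_nonneg ht1' n2]
        exact ⟨(mul_eq_zero.mp h1z).resolve_left (ne_of_gt ht0),
          (mul_eq_zero.mp h2z).resolve_left (by intro h; linarith [sub_eq_zero.mp h])⟩
      have h₁F : γ₁ ∈ F := ⟨h₁, fun p q h0 => (hz p q h0).1⟩
      have h₂F : γ₂ ∈ F := ⟨h₂, fun p q h0 => (hz p q h0).2⟩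
      have hres := hemin γ₁ h₁F γ₂ h₂F ⟨t, 1 - t, ht0, by linarith, by ring, heq.symm⟩
      exact ⟨hres.1.symm, hres.2.symm⟩
    refine ⟨e, heF.1, hext e heOpt, ?_⟩
    intro pq hpq
    simp only [jsupp, Set.mem_setOf_eq] at hpq ⊢
    rcases eq_or_lt_of_le (hγ.1.1.1 pq.1 pq.2) with h0 | h
    · exact absurd (heF.2 pq.1 pq.2 h0.symm) (by linarith)
    · exact h
end

section
/- Let G = (U,α) and H = (V,β) be weighted graphs with label functions ψ_G : U → 𝓐 and ψ_H : V → 𝓐 that are both locally injective (the restriction of ψ_G to each neighborhood N_G(u) = {u' : α(u,u') > 0} is injective, and similarly for ψ_H), and let c_Ψ(u,v) = 1 if ψ_G(u) ≠ ψ_H(v) and 0 otherwise. Suppose ρ_{c_Ψ}(G,H) = 0, and let γ ∈ J(α,β) satisfy ⟨c_Ψ, r_γ⟩ = 0. Then for any (u,v) with r_γ(u,v) > 0: if γ((u,v),(u₁,v₁)) > 0 and γ((u,v),(u₁,v₁')) > 0, then v₁ = v₁'; and if γ((u,v),(u₁,v₁)) > 0 and γ((u,v),(u₁',v₁)) > 0,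 then u₁ = u₁'. -/
/-!
A zero-cost joining only charges pairs `(u, v)` with equal labels `ψG u = ψH v`. The transition
coupling forces every positive edge `(u, v) → (u₁, v₁)` of `γ` to project to edges `u → u₁` of `G`
and `v → v₁` of `H`, and by symmetry of `γ` its target `(u₁, v₁)` again has positive marginal, so
it carries equal labels as well. Two such edges sharing `u₁` give two neighbours `v₁, v₁'` of `v`
with the label `ψG u₁`, hence `v₁ = v₁'` by local injectivity of `ψH`; symmetrically in `U`.
-/

open Finset

open Classical in
/-- The 0-1 label-agreement cost function induced by label functions. -/
noncomputable def labelCost {U V A : Type*} (ψG : U → A) (ψH : V → A) : U → V → ℝ :=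
  fun u v => if ψG u = ψH v then 0 else 1

namespace IsWeightFunction

variable {U : Type*} [Fintype U] {α : U → U → ℝ}

lemma le_marginal (hα : IsWeightFunction α) (u u' : U) : α u u' ≤ marginal α u :=
  single_le_sum (fun w _ => hα.1 u w) (mem_univ u')

lemma marginal_nonneg (hα : IsWeightFunction α) (u : U) : 0 ≤ marginal α u :=
  sum_nonneg fun w _ => hα.1 u w

lemma marginal_left_pos_of_pos (hα : IsWeightFunction α) {u u' : U} (h : 0 < α u u') :
    0 < marginal α u :=
  h.trans_le (hα.le_marginal u u')

lemma marginal_right_pos_of_pos (hα : IsWeightFunction α) {u u' : U} (h : 0 < α u u') :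
    0 < marginal α u' :=
  hα.marginal_left_pos_of_pos (hα.2.1 u u' ▸ h)

end IsWeightFunction

namespace IsWeightJoining

variable {U V : Type*} [Fintype U] [Fintype V]
  {α : U → U → ℝ} {β : V → V → ℝ} {γ : U × V → U × V → ℝ}

lemma marginal_fst_pos (hγ : IsWeightJoining α β γ) {u : U} {v : V}
    (h : 0 < marginal γ (u, v)) : 0 < marginal α u := by
  rw [← hγ.2.1 u]
  exact h.trans_le (single_le_sum (fun w _ => hγ.1.marginal_nonneg (u, w)) (mem_univ v))

lemma marginal_snd_pos (hγ : IsWeightJoining α β γ) {u : U} {v : V}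
    (h : 0 < marginal γ (u, v)) : 0 < marginal β v := by
  rw [← hγ.2.2.1 v]
  exact h.trans_le (single_le_sum (fun w _ => hγ.1.marginal_nonneg (w, v)) (mem_univ u))

lemma fst_pos_of_pos (hγ : IsWeightJoining α β γ) {u u₁ : U} {v v₁ : V}
    (h : 0 < γ (u, v) (u₁, v₁)) : 0 < α u u₁ := by
  have hm : 0 < marginal γ (u, v) := hγ.1.marginal_left_pos_of_pos h
  have hsum : 0 < ∑ v', γ (u, v) (u₁, v') :=
    h.trans_le (single_le_sum (fun w _ => hγ.1.1 (u, v) (u₁, w)) (mem_univ v₁))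
  have hprod : 0 < α u u₁ * marginal γ (u, v) := by
    rw [← hγ.2.2.2.1 u u₁ v]
    exact mul_pos (hγ.marginal_fst_pos hm) hsum
  exact pos_of_mul_pos_left hprod hm.le

lemma snd_pos_of_pos (hγ : IsWeightJoining α β γ) {u u₁ : U} {v v₁ : V}
    (h : 0 < γ (u, v) (u₁, v₁)) : 0 < β v v₁ := by
  have hm : 0 < marginal γ (u, v) := hγ.1.marginal_left_pos_of_pos h
  have hsum : 0 < ∑ u', γ (u, v) (u', v₁) :=
    h.trans_le (single_le_sum (fun w _ => hγ.1.1 (u, v) (w, v₁)) (mem_univ u₁))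
  have hprod : 0 < β v v₁ * marginal γ (u, v) := by
    rw [← hγ.2.2.2.2 v v₁ u]
    exact mul_pos (hγ.marginal_snd_pos hm) hsum
  exact pos_of_mul_pos_left hprod hm.le

end IsWeightJoining

lemma cost_eq_zero_of_ogjCost_eq_zero {U V : Type*} [Fintype U] [Fintype V]
    {c : U → V → ℝ} {γ : U × V → U × V → ℝ} (hc : ∀ u v, 0 ≤ c u v)
    (hγ : IsWeightFunction γ) (h : ogjCost c γ = 0) {p : U × V} (hp : 0 < marginal γ p) :
    c p.1 p.2 = 0 := by
  have hterm : ∀ q ∈ (univ : Finset (U × V)), 0 ≤ c q.1 q.2 * marginal γ q :=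
    fun q _ => mul_nonneg (hc q.1 q.2) (hγ.marginal_nonneg q)
  have hp0 := (sum_eq_zero_iff_of_nonneg hterm).mp h p (mem_univ p)
  exact (mul_eq_zero.mp hp0).resolve_right hp.ne'

lemma labelCost_nonneg {U V A : Type*} (ψG : U → A) (ψH : V → A) (u : U) (v : V) :
    0 ≤ labelCost ψG ψH u v := by
  unfold labelCost
  split <;> norm_num

lemma labelCost_eq_zero_iff {U V A : Type*} {ψG : U → A} {ψH : V → A} {u : U} {v : V} :
    labelCost ψG ψH u v = 0 ↔ ψG u = ψH v := by
  unfold labelCost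
  split <;> simp_all

lemma label_eq_of_ogjCost_labelCost_eq_zero {U V A : Type*} [Fintype U] [Fintype V]
    {ψG : U → A} {ψH : V → A} {γ : U × V → U × V → ℝ} (hγ : IsWeightFunction γ)
    (h : ogjCost (labelCost ψG ψH) γ = 0) {u : U} {v : V} (huv : 0 < marginal γ (u, v)) :
    ψG u = ψH v :=
  labelCost_eq_zero_iff.mp (cost_eq_zero_of_ogjCost_eq_zero (labelCost_nonneg ψG ψH) hγ h huv)

theorem locally_injective_labels_give_locally_injective_projections_general
    {U V A : Type*} [Fintype U] [Fintype V]
    (α : U → U → ℝ) (β : V → V → ℝ)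
    (ψG : U → A) (ψH : V → A)
    (hlocG : ∀ u u₁ u₂ : U, 0 < α u u₁ → 0 < α u u₂ → ψG u₁ = ψG u₂ → u₁ = u₂)
    (hlocH : ∀ v v₁ v₂ : V, 0 < β v v₁ → 0 < β v v₂ → ψH v₁ = ψH v₂ → v₁ = v₂)
    (γ : U × V → U × V → ℝ)
    (hγ : γ ∈ weightJoinings α β)
    (hcost : ogjCost (labelCost ψG ψH) γ = 0) :
    ∀ u : U, ∀ v : V, 0 < marginal γ (u, v) →
      (∀ u₁ : U, ∀ v₁ v₁' : V,
        0 < γ (u, v) (u₁, v₁) → 0 < γ (u, v) (u₁, v₁') → v₁ = v₁') ∧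
      (∀ u₁ u₁' : U, ∀ v₁ : V,
        0 < γ (u, v) (u₁, v₁) → 0 < γ (u, v) (u₁', v₁) → u₁ = u₁') := by
  have hγ : IsWeightJoining α β γ := hγ
  have target_label_eq : ∀ {u u₁ : U} {v v₁ : V}, 0 < γ (u, v) (u₁, v₁) → ψG u₁ = ψH v₁ :=
    fun h => label_eq_of_ogjCost_labelCost_eq_zero hγ.1 hcost (hγ.1.marginal_right_pos_of_pos h)
  intro u v _
  constructor
  · intro u₁ v₁ v₁' h h'
    exact hlocH v v₁ v₁' (hγ.snd_pos_of_pos h) (hγ.snd_pos_of_pos h')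
      ((target_label_eq h).symm.trans (target_label_eq h'))
  · intro u₁ u₁' v₁ h h'
    exact hlocG u u₁ u₁' (hγ.fst_pos_of_pos h) (hγ.fst_pos_of_pos h')
      ((target_label_eq h).trans (target_label_eq h').symm)

/-- Suppose the label functions `ψ_G` and `ψ_H` are locally injective
(injective on each neighborhood), `ρ_{c_Ψ}(G,H) = 0`, and `γ ∈ J(α,β)` has zero cost.
Then from any pair `(u,v)` with positive marginal, the positively-weighted `γ`-edges
out of `(u,v)` project injectively to `U` and to `V`. -/
theorem locally_injective_labels_give_locally_injective_projections
    {U V A : Type*} [Fintype U] [Fintype V]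
    (α : U → U → ℝ) (β : V → V → ℝ)
    (hα : IsWeightFunction α) (hβ : IsWeightFunction β)
    (ψG : U → A) (ψH : V → A)
    (hlocG : ∀ u u₁ u₂ : U, 0 < α u u₁ → 0 < α u u₂ → ψG u₁ = ψG u₂ → u₁ = u₂)
    (hlocH : ∀ v v₁ v₂ : V, 0 < β v v₁ → 0 < β v v₂ → ψH v₁ = ψH v₂ → v₁ = v₂)
    (hρ : sInf {x : ℝ | ∃ γ' ∈ weightJoinings α β, x = ogjCost (labelCost ψG ψH) γ'} = 0)
    (γ : U × V → U × V → ℝ)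
    (hγ : γ ∈ weightJoinings α β)
    (hcost : ogjCost (labelCost ψG ψH) γ = 0) :
    ∀ u : U, ∀ v : V, 0 < marginal γ (u, v) →
      (∀ u₁ : U, ∀ v₁ v₁' : V,
        0 < γ (u, v) (u₁, v₁) → 0 < γ (u, v) (u₁, v₁') → v₁ = v₁') ∧
      (∀ u₁ u₁' : U, ∀ v₁ : V,
        0 < γ (u, v) (u₁, v₁) → 0 < γ (u, v) (u₁', v₁) → u₁ = u₁') :=
  locally_injective_labels_give_locally_injective_projections_general α β ψG ψH hlocG hlocH γ hγ
    hcost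
end

section
/- Let G = (U,α,φ_G) and H = (V,β,φ_H) be weighted labeled graphs with augmented label functions ψ_G(u) = (φ_G(u), m_G(u)) and ψ_H(v) = (φ_H(v), m_H(v)) given by the primary labels together with the multiweight labels, and let c_Ψ(u,v) = 1 if ψ_G(u) ≠ ψ_H(v) and 0 otherwise. Suppose γ ∈ J(α,β) satisfies ⟨c_Ψ, r_γ⟩ = 0, and suppose there exist u₀ ∈ U and v₀ ∈ V with r_γ(u₀,v₀) = p(u₀) = q(v₀) and N_G(u₀) ∩ L(G) ≠ ∅. Then there exists a bijection σ : N_G(u₀) ∩ L(G) → N_H(v₀) ∩ L(H) such that γ((u₀,v₀),(u,σ(u))) > 0 for every u ∈ N_G(u₀) ∩ L(G). -/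
open Finset

/-- The multiweight label of a vertex `u`: the multiset of weights of the
positive-weight edges incident to `u`. -/
noncomputable def multiweight {U : Type*} [Fintype U] (α : U → U → ℝ) (u : U) : Multiset ℝ :=
  (Finset.univ.val.map fun u' => α u u').filter fun x => 0 < x

/-- A vertex `u` is a leaf if there is exactly one vertex `u'` with `α(u,u') > 0`,
and moreover `u' ≠ u`. -/
def IsLeaf {U : Type*} (α : U → U → ℝ) (u : U) : Prop :=
  ∃ u', u' ≠ u ∧ 0 < α u u' ∧ ∀ u'', 0 < α u u'' → u'' = u'

/-!
Since `r_γ(u₀,v₀) = p(u₀) = q(v₀) > 0`, transition coupling at `(u₀,v₀)` makes `γ((u₀,v₀), ·)` a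
coupling of `α(u₀, ·)` and `β(v₀, ·)`, and marginal coupling forces `r_γ` to vanish on the rest of
the row of `u₀` and the column of `v₀`. If `γ((u₀,v₀),(u,v)) > 0` then `r_γ(u,v) > 0`, so `u` and
`v` carry the same multiweight label. Next to `u₀`, a vertex is a leaf iff its multiweight label
has one element, so `u` is a leaf neighbour of `u₀` iff `v` is one of `v₀`, and then both edges
have the same weight. Hence `γ((u₀,v₀),(u,v)) / α(u₀,u)` is doubly stochastic on leaf neighbours,
and by Hall's theorem its support contains a perfect matching.
-/

namespace Finset

variable {ι κ : Type*}

theorem card_eq_of_sum_eq_one (M : ι → κ → ℝ) {s : Finset ι} {t : Finset κ}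
    (hrow : ∀ i ∈ s, ∑ j ∈ t, M i j = 1) (hcol : ∀ j ∈ t, ∑ i ∈ s, M i j = 1) :
    #s = #t := by
  have h : (#s : ℝ) = #t := calc
    (#s : ℝ) = ∑ i ∈ s, ∑ j ∈ t, M i j := by rw [sum_congr rfl hrow]; simp
    _ = ∑ j ∈ t, ∑ i ∈ s, M i j := sum_comm
    _ = #t := by rw [sum_congr rfl hcol]; simp
  exact_mod_cast h

theorem exists_injOn_pos_of_sum_eq_one_of_sum_le_one [Nonempty κ] (M : ι → κ → ℝ)
    {s : Finset ι} {t : Finset κ} (hM : ∀ i ∈ s, ∀ j ∈ t, 0 ≤ M i j)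
    (hrow : ∀ i ∈ s, ∑ j ∈ t, M i j = 1) (hcol : ∀ j ∈ t, ∑ i ∈ s, M i j ≤ 1) :
    ∃ f : ι → κ, Set.MapsTo f s t ∧ Set.InjOn f s ∧ ∀ i ∈ s, 0 < M i (f i) := by
  classical
  set N : s → Finset κ := fun i => {j ∈ t | 0 < M i j}
  -- Hall's condition: the rows in `A` carry mass `#A`, all of it on the columns of their
  -- neighbourhood, each of which carries mass at most `1`.
  have hall : ∀ A : Finset s, #A ≤ #(A.biUnion N) := by
    intro A
    have hNt : A.biUnion N ⊆ t := biUnion_subset.2 fun i _ => filter_subset _ _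
    have h : (#A : ℝ) ≤ #(A.biUnion N) := calc
      (#A : ℝ) = ∑ i ∈ A, ∑ j ∈ t, M i j := by
          rw [sum_congr rfl fun (i : s) _ => hrow i i.2]; simp
      _ = ∑ i ∈ A, ∑ j ∈ A.biUnion N, M i j := by
          refine sum_congr rfl fun i hi => (sum_subset hNt fun j hj hjN => ?_).symm
          have hj' : j ∉ N i := fun h => hjN (mem_biUnion.2 ⟨i, hi, h⟩)
          simp only [N, mem_filter, not_and, not_lt] at hj'
          exact le_antisymm (hj' hj) (hM i i.2 j hj)
      _ = ∑ j ∈ A.biUnion N, ∑ i ∈ A, M i j := sum_comm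
      _ ≤ ∑ j ∈ A.biUnion N, ∑ i : s, M i j := by
          refine sum_le_sum fun j hj => sum_le_univ_sum_of_nonneg fun i => hM i i.2 j (hNt hj)
      _ ≤ #(A.biUnion N) := by
          rw [card_eq_sum_ones, Nat.cast_sum]
          exact sum_le_sum fun j hj => by rw [sum_coe_sort s (M · j)]; simpa using hcol j (hNt hj)
    exact_mod_cast h
  obtain ⟨g, hg_inj, hg_mem⟩ := (all_card_le_biUnion_card_iff_existsInjective' N).1 hall
  have hg : ∀ i : s, g i ∈ t ∧ 0 < M i (g i) := fun i => mem_filter.1 (hg_mem i)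
  set f : ι → κ := fun i => if h : i ∈ s then g ⟨i, h⟩ else Classical.arbitrary κ
  have hf : ∀ i (hi : i ∈ s), f i = g ⟨i, hi⟩ := fun i hi => dif_pos hi
  refine ⟨f, fun i hi => ?_, fun i hi i' hi' h => ?_, fun i hi => ?_⟩
  · exact hf i hi ▸ (hg ⟨i, hi⟩).1
  · rw [hf i hi, hf i' hi'] at h
    exact congrArg Subtype.val (hg_inj h)
  · exact hf i hi ▸ (hg ⟨i, hi⟩).2

theorem exists_bijOn_pos_of_sum_eq_one [Nonempty κ] (M : ι → κ → ℝ)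
    {s : Finset ι} {t : Finset κ} (hM : ∀ i ∈ s, ∀ j ∈ t, 0 ≤ M i j)
    (hrow : ∀ i ∈ s, ∑ j ∈ t, M i j = 1) (hcol : ∀ j ∈ t, ∑ i ∈ s, M i j = 1) :
    ∃ f : ι → κ, Set.BijOn f s t ∧ ∀ i ∈ s, 0 < M i (f i) := by
  obtain ⟨f, hmaps, hinj, hpos⟩ :=
    exists_injOn_pos_of_sum_eq_one_of_sum_le_one M hM hrow fun j hj => (hcol j hj).le
  refine ⟨f, ⟨hmaps, hinj, surjOn_of_injOn_of_card_le f hmaps hinj ?_⟩, hpos⟩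
  exact (card_eq_of_sum_eq_one M hrow hcol).ge

end Finset

section Leaf

variable {U : Type*} {α : U → U → ℝ} {u u₀ : U}

theorem IsLeaf.ne_of_pos (hu : IsLeaf α u) (h : 0 < α u₀ u) : u ≠ u₀ := by
  rintro rfl
  obtain ⟨u', hne, -, huniq⟩ := hu
  exact hne (huniq u h).symm

variable [Fintype U]

theorem card_multiweight (α : U → U → ℝ) (u : U) :
    Multiset.card (multiweight α u) = #{x | 0 < α u x} := by
  rw [multiweight, ← Multiset.countP_eq_card_filter, Multiset.countP_map]
  rfl

theorem mem_multiweight (h : 0 < α u u₀) : α u u₀ ∈ multiweight α u :=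
  Multiset.mem_filter.2 ⟨Multiset.mem_map.2 ⟨u₀, mem_univ_val u₀, rfl⟩, h⟩

theorem isLeaf_iff_card_multiweight_eq_one (hα : ∀ x y, α x y = α y x) (h : 0 < α u₀ u)
    (hne : u ≠ u₀) : IsLeaf α u ↔ Multiset.card (multiweight α u) = 1 := by
  rw [card_multiweight, card_eq_one]
  constructor
  · rintro ⟨u', -, hu', huniq⟩
    exact ⟨u', by ext x; simpa using ⟨huniq x, fun hx => hx ▸ hu'⟩⟩
  · rintro ⟨w, hw⟩
    have hmem : ∀ x, 0 < α u x ↔ x = w := by simpa [Finset.ext_iff] using hw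
    obtain rfl : u₀ = w := (hmem u₀).1 (hα u₀ u ▸ h)
    exact ⟨u₀, hne.symm, (hmem u₀).2 rfl, fun x hx => (hmem x).1 hx⟩

theorem IsLeaf.multiweight_eq (hα : ∀ x y, α x y = α y x) (hu : IsLeaf α u)
    (h : 0 < α u₀ u) : multiweight α u = {α u₀ u} := by
  obtain ⟨a, ha⟩ := Multiset.card_eq_one.1
    ((isLeaf_iff_card_multiweight_eq_one hα h (hu.ne_of_pos h)).1 hu)
  have hmem := mem_multiweight (hα u₀ u ▸ h)
  rw [ha, Multiset.mem_singleton] at hmem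
  rw [ha, ← hmem, hα]

end Leaf

theorem marginal_nonneg {U : Type*} [Fintype U] {α : U → U → ℝ} (hα : ∀ x y, 0 ≤ α x y)
    (u : U) : 0 ≤ marginal α u :=
  sum_nonneg fun u' _ => hα u u'

theorem apply_le_marginal_of_nonneg {U : Type*} [Fintype U] {α : U → U → ℝ}
    (hα : ∀ x y, 0 ≤ α x y) (u u' : U) : α u u' ≤ marginal α u :=
  single_le_sum (fun x _ => hα u x) (mem_univ u')

theorem IsWeightFunction.apply_le_marginal {U : Type*} [Fintype U] {α : U → U → ℝ}
    (hα : IsWeightFunction α) (u u' : U) : α u u' ≤ marginal α u' :=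
  hα.2.1 u u' ▸ apply_le_marginal_of_nonneg hα.1 u' u

theorem eq_of_ogjCost_labelCost_eq_zero {U V A : Type*} [Fintype U] [Fintype V]
    {ψG : U → A} {ψH : V → A} {γ : U × V → U × V → ℝ} (hγ : ∀ x y, 0 ≤ γ x y)
    (hcost : ogjCost (labelCost ψG ψH) γ = 0) {u : U} {v : V} (h : 0 < marginal γ (u, v)) :
    ψG u = ψH v := by
  classical
  have hterm : ∀ x ∈ (univ : Finset (U × V)), 0 ≤ labelCost ψG ψH x.1 x.2 * marginal γ x :=
    fun x _ => mul_nonneg (by unfold labelCost; split_ifs <;> norm_num) (marginal_nonneg hγ x)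
  have h0 := (sum_eq_zero_iff_of_nonneg hterm).1 hcost (u, v) (mem_univ _)
  by_contra hne
  simp [labelCost, hne, h.ne'] at h0

open Classical in
noncomputable def leafNeighbors {U : Type*} [Fintype U] (α : U → U → ℝ) (u₀ : U) : Finset U :=
  {u | 0 < α u₀ u ∧ IsLeaf α u}

theorem mem_leafNeighbors {U : Type*} [Fintype U] {α : U → U → ℝ} {u₀ u : U} :
    u ∈ leafNeighbors α u₀ ↔ 0 < α u₀ u ∧ IsLeaf α u := by
  simp [leafNeighbors]

namespace IsWeightJoining

variable {U V : Type*} [Fintype U] [Fintype V] {α : U → U → ℝ} {β : V → V → ℝ}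
  {γ : U × V → U × V → ℝ} {u₀ u : U} {v₀ v : V}

theorem sum_apply_snd (hγ : IsWeightJoining α β γ)
    (hmarg : marginal γ (u₀, v₀) = marginal α u₀) (hp : marginal α u₀ ≠ 0) (u : U) :
    ∑ v, γ (u₀, v₀) (u, v) = α u₀ u :=
  mul_left_cancel₀ hp (by rw [hγ.2.2.2.1 u₀ u v₀, hmarg, mul_comm])

theorem sum_apply_fst (hγ : IsWeightJoining α β γ)
    (hmarg : marginal γ (u₀, v₀) = marginal β v₀) (hq : marginal β v₀ ≠ 0) (v : V) :
    ∑ u, γ (u₀, v₀) (u, v) = β v₀ v :=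
  mul_left_cancel₀ hq (by rw [hγ.2.2.2.2 v₀ v u₀, hmarg, mul_comm])

theorem apply_le_left (hγ : IsWeightJoining α β γ)
    (hmarg : marginal γ (u₀, v₀) = marginal α u₀) (hp : marginal α u₀ ≠ 0) (u : U) (v : V) :
    γ (u₀, v₀) (u, v) ≤ α u₀ u :=
  hγ.sum_apply_snd hmarg hp u ▸ single_le_sum (fun v' _ => hγ.1.1 _ (u, v')) (mem_univ v)

theorem apply_le_right (hγ : IsWeightJoining α β γ)
    (hmarg : marginal γ (u₀, v₀) = marginal β v₀) (hq : marginal β v₀ ≠ 0) (u : U) (v : V) :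
    γ (u₀, v₀) (u, v) ≤ β v₀ v :=
  hγ.sum_apply_fst hmarg hq v ▸ single_le_sum (fun u' _ => hγ.1.1 _ (u', v)) (mem_univ u)

theorem marginal_eq_zero_of_ne_snd (hγ : IsWeightJoining α β γ)
    (hmarg : marginal γ (u₀, v₀) = marginal α u₀) (hv : v ≠ v₀) : marginal γ (u₀, v) = 0 := by
  classical
  have hle : ∑ v' ∈ {v₀, v}, marginal γ (u₀, v') ≤ ∑ v', marginal γ (u₀, v') :=
    sum_le_univ_sum_of_nonneg fun _ => marginal_nonneg hγ.1.1 _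
  rw [sum_pair hv.symm, hγ.2.1, ← hmarg] at hle
  exact le_antisymm (by linarith) (marginal_nonneg hγ.1.1 _)

theorem marginal_eq_zero_of_ne_fst (hγ : IsWeightJoining α β γ)
    (hmarg : marginal γ (u₀, v₀) = marginal β v₀) (hu : u ≠ u₀) : marginal γ (u, v₀) = 0 := by
  classical
  have hle : ∑ u' ∈ {u₀, u}, marginal γ (u', v₀) ≤ ∑ u', marginal γ (u', v₀) :=
    sum_le_univ_sum_of_nonneg fun _ => marginal_nonneg hγ.1.1 _
  rw [sum_pair hu.symm, hγ.2.2.1, ← hmarg] at hle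
  exact le_antisymm (by linarith) (marginal_nonneg hγ.1.1 _)

theorem eq_left_iff_eq_right (hγ : IsWeightJoining α β γ)
    (hmarg₁ : marginal γ (u₀, v₀) = marginal α u₀)
    (hmarg₂ : marginal γ (u₀, v₀) = marginal β v₀) (h : 0 < γ (u₀, v₀) (u, v)) :
    u = u₀ ↔ v = v₀ := by
  have hr : marginal γ (u, v) ≠ 0 := (h.trans_le (hγ.1.apply_le_marginal _ _)).ne'
  constructor
  · rintro rfl
    exact not_imp_comm.1 (hγ.marginal_eq_zero_of_ne_snd hmarg₁) hr
  · rintro rfl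
    exact not_imp_comm.1 (hγ.marginal_eq_zero_of_ne_fst hmarg₂) hr

variable (hγ : IsWeightJoining α β γ) (hα : ∀ x y, α x y = α y x) (hβ : ∀ x y, β x y = β y x)
  (hmw : ∀ u v, 0 < marginal γ (u, v) → multiweight α u = multiweight β v)
  (hmarg₁ : marginal γ (u₀, v₀) = marginal α u₀) (hmarg₂ : marginal γ (u₀, v₀) = marginal β v₀)
  (hp : marginal α u₀ ≠ 0)
include hγ hα hβ hmw hmarg₁ hmarg₂ hp

theorem isLeaf_iff_isLeaf (h : 0 < γ (u₀, v₀) (u, v)) : IsLeaf α u ↔ IsLeaf β v := by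
  have hq : marginal β v₀ ≠ 0 := hmarg₂ ▸ hmarg₁ ▸ hp
  have hα₀ : 0 < α u₀ u := h.trans_le (hγ.apply_le_left hmarg₁ hp u v)
  have hβ₀ : 0 < β v₀ v := h.trans_le (hγ.apply_le_right hmarg₂ hq u v)
  have hmwuv := hmw u v (h.trans_le (hγ.1.apply_le_marginal _ _))
  have hne := hγ.eq_left_iff_eq_right hmarg₁ hmarg₂ h
  constructor
  · intro hu
    have hu₀ := hu.ne_of_pos hα₀
    rwa [isLeaf_iff_card_multiweight_eq_one hβ hβ₀ (mt hne.2 hu₀), ← hmwuv,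
      ← isLeaf_iff_card_multiweight_eq_one hα hα₀ hu₀]
  · intro hv
    have hv₀ := hv.ne_of_pos hβ₀
    rwa [isLeaf_iff_card_multiweight_eq_one hα hα₀ (mt hne.1 hv₀), hmwuv,
      ← isLeaf_iff_card_multiweight_eq_one hβ hβ₀ hv₀]

theorem apply_eq_of_isLeaf (h : 0 < γ (u₀, v₀) (u, v)) (hu : IsLeaf α u) :
    α u₀ u = β v₀ v := by
  have hq : marginal β v₀ ≠ 0 := hmarg₂ ▸ hmarg₁ ▸ hp
  have hv := (hγ.isLeaf_iff_isLeaf hα hβ hmw hmarg₁ hmarg₂ hp h).1 hu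
  have hmwuv := hmw u v (h.trans_le (hγ.1.apply_le_marginal _ _))
  rwa [hu.multiweight_eq hα (h.trans_le (hγ.apply_le_left hmarg₁ hp u v)),
    hv.multiweight_eq hβ (h.trans_le (hγ.apply_le_right hmarg₂ hq u v)),
    Multiset.singleton_inj] at hmwuv

theorem sum_leafNeighbors_snd (hu : u ∈ leafNeighbors α u₀) :
    ∑ v ∈ leafNeighbors β v₀, γ (u₀, v₀) (u, v) = α u₀ u := by
  have hq : marginal β v₀ ≠ 0 := hmarg₂ ▸ hmarg₁ ▸ hp
  rw [← hγ.sum_apply_snd hmarg₁ hp u]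
  refine sum_subset (subset_univ _) fun v _ hv => ?_
  by_contra h
  have h' := (hγ.1.1 _ _).lt_of_ne' h
  rw [mem_leafNeighbors] at hu
  exact hv (mem_leafNeighbors.2 ⟨h'.trans_le (hγ.apply_le_right hmarg₂ hq u v),
    (hγ.isLeaf_iff_isLeaf hα hβ hmw hmarg₁ hmarg₂ hp h').1 hu.2⟩)

theorem sum_leafNeighbors_fst (hv : v ∈ leafNeighbors β v₀) :
    ∑ u ∈ leafNeighbors α u₀, γ (u₀, v₀) (u, v) = β v₀ v := by
  have hq : marginal β v₀ ≠ 0 := hmarg₂ ▸ hmarg₁ ▸ hp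
  rw [← hγ.sum_apply_fst hmarg₂ hq v]
  refine sum_subset (subset_univ _) fun u _ hu => ?_
  by_contra h
  have h' := (hγ.1.1 _ _).lt_of_ne' h
  rw [mem_leafNeighbors] at hv
  exact hu (mem_leafNeighbors.2 ⟨h'.trans_le (hγ.apply_le_left hmarg₁ hp u v),
    (hγ.isLeaf_iff_isLeaf hα hβ hmw hmarg₁ hmarg₂ hp h').2 hv.2⟩)

theorem apply_div_left_eq_apply_div_right (hu : IsLeaf α u) :
    γ (u₀, v₀) (u, v) / α u₀ u = γ (u₀, v₀) (u, v) / β v₀ v := by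
  rcases (hγ.1.1 (u₀, v₀) (u, v)).eq_or_lt with h | h
  · rw [← h, zero_div, zero_div]
  · rw [hγ.apply_eq_of_isLeaf hα hβ hmw hmarg₁ hmarg₂ hp h hu]

theorem exists_bijOn_leafNeighbors [Nonempty V] :
    ∃ σ : U → V, Set.BijOn σ (leafNeighbors α u₀) (leafNeighbors β v₀) ∧
      ∀ u ∈ leafNeighbors α u₀, 0 < γ (u₀, v₀) (u, σ u) := by
  have hrow : ∀ u ∈ leafNeighbors α u₀,
      ∑ v ∈ leafNeighbors β v₀, γ (u₀, v₀) (u, v) / α u₀ u = 1 := fun u hu => by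
    rw [← sum_div, hγ.sum_leafNeighbors_snd hα hβ hmw hmarg₁ hmarg₂ hp hu,
      div_self (mem_leafNeighbors.1 hu).1.ne']
  have hcol : ∀ v ∈ leafNeighbors β v₀,
      ∑ u ∈ leafNeighbors α u₀, γ (u₀, v₀) (u, v) / α u₀ u = 1 := fun v hv => by
    rw [sum_congr rfl fun u hu => hγ.apply_div_left_eq_apply_div_right hα hβ hmw hmarg₁ hmarg₂
      hp (mem_leafNeighbors.1 hu).2, ← sum_div,
      hγ.sum_leafNeighbors_fst hα hβ hmw hmarg₁ hmarg₂ hp hv,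
      div_self (mem_leafNeighbors.1 hv).1.ne']
  obtain ⟨σ, hσ, hpos⟩ := exists_bijOn_pos_of_sum_eq_one _
    (fun u hu v _ => div_nonneg (hγ.1.1 _ _) (mem_leafNeighbors.1 hu).1.le) hrow hcol
  exact ⟨σ, hσ, fun u hu => (div_pos_iff_of_pos_right (mem_leafNeighbors.1 hu).1).1 (hpos u hu)⟩

end IsWeightJoining

/-- Suppose the augmented labels (primary label together with the
multiweight) give a zero-cost weight joining `γ`, and `(u₀, v₀)` satisfies
`r_γ(u₀,v₀) = p(u₀) = q(v₀)` with `u₀` adjacent to at least one leaf.  Then there is a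
bijection `σ` from the leaf neighbors of `u₀` in `G` onto the leaf neighbors of `v₀`
in `H` such that `γ((u₀,v₀),(u,σ(u))) > 0` for every leaf neighbor `u` of `u₀`. -/
theorem leaf_alignment
    {U V L : Type*} [Fintype U] [Fintype V]
    (α : U → U → ℝ) (β : V → V → ℝ)
    (hα : IsWeightFunction α) (hβ : IsWeightFunction β)
    (φG : U → L) (φH : V → L)
    (γ : U × V → U × V → ℝ) (hγ : γ ∈ weightJoinings α β)
    (hcost : ogjCost (labelCost (fun u => (φG u, multiweight α u))
      (fun v => (φH v, multiweight β v))) γ = 0)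
    (u₀ : U) (v₀ : V)
    (hmarg₁ : marginal γ (u₀, v₀) = marginal α u₀)
    (hmarg₂ : marginal γ (u₀, v₀) = marginal β v₀)
    (hleafnbr : ∃ u : U, 0 < α u₀ u ∧ IsLeaf α u) :
    ∃ σ : U → V,
      Set.BijOn σ {u : U | 0 < α u₀ u ∧ IsLeaf α u}
        {v : V | 0 < β v₀ v ∧ IsLeaf β v} ∧
      ∀ u : U, 0 < α u₀ u → IsLeaf α u → 0 < γ (u₀, v₀) (u, σ u) := by
  obtain ⟨u₁, hu₁, -⟩ := hleafnbr
  have hp : marginal α u₀ ≠ 0 := (hu₁.trans_le (apply_le_marginal_of_nonneg hα.1 u₀ u₁)).ne'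
  have hmw : ∀ u v, 0 < marginal γ (u, v) → multiweight α u = multiweight β v :=
    fun u v h => congrArg Prod.snd (eq_of_ogjCost_labelCost_eq_zero hγ.1.1 hcost h)
  have : Nonempty V := ⟨v₀⟩
  obtain ⟨σ, hσ, hpos⟩ := hγ.exists_bijOn_leafNeighbors hα.2.1 hβ.2.1 hmw hmarg₁ hmarg₂ hp
  refine ⟨σ, by simpa [leafNeighbors] using hσ, fun u h₁ h₂ => hpos u ?_⟩
  exact mem_leafNeighbors.2 ⟨h₁, h₂⟩
end
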